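/- Let d ≥ 2, p, q ∈ [0,1], and γ ≥ 1. For the Werner states ω^q and ω^p on ℂ^d ⊗ ℂ^d, the PPT-measured hockey-stick divergence satisfies E_γ^PPT(ω^q‖ω^p) = max{0, 2(q − γp)/(d+1), 1 − γ − 2(q − γp)/(d+1)}. -/

import Mathlib

noncomputable section
open Matrix ComplexOrder

/-- Bipartite complex matrices on ℂ^d ⊗ ℂ^d. -/
abbrev BMat (d : ℕ) := Matrix (Fin d × Fin d) (Fin d × Fin d) ℂ

/-- The swap operator `F = Σ_{i,j} |i⟩⟨j| ⊗ |j⟩⟨i|`. -/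
def swapOp (d : ℕ) : BMat d :=
  fun p q => if p.1 = q.2 ∧ p.2 = q.1 then 1 else 0

/-- The symmetric Werner extreme state `Θ = (I + F)/(d(d+1))`. -/
def wΘ (d : ℕ) : BMat d := ((d : ℂ) * ((d : ℂ) + 1))⁻¹ • (1 + swapOp d)

/-- The antisymmetric Werner extreme state `Θ⊥ = (I − F)/(d(d−1))`. -/
def wΘperp (d : ℕ) : BMat d := ((d : ℂ) * ((d : ℂ) - 1))⁻¹ • (1 - swapOp d)

/-- The Werner state `ω^p = pΘ + (1−p)Θ⊥`. -/
def werner (d : ℕ) (p : ℝ) : BMat d := (p : ℂ) • wΘ d + ((1 - p : ℝ) : ℂ) • wΘperp d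

/-- The partial transpose on the second tensor factor:
`T_B(M)((a,b),(a',b')) := M((a,b'),(a',b))`. -/
def ptB {d : ℕ} (M : BMat d) : BMat d :=
  fun p q => M (p.1, q.2) (q.1, p.2)

/-- PPT-measured hockey-stick divergence for γ ≥ 1. -/
def EgPPT {d : ℕ} (γ : ℝ) (ρ σ : BMat d) : ℝ :=
  sSup {x : ℝ | ∃ M : BMat d, M.PosSemidef ∧ ((1 : BMat d) - M).PosSemidef ∧
    (ptB M).PosSemidef ∧ ((1 : BMat d) - ptB M).PosSemidef ∧
    x = ((M * (ρ - (γ : ℂ) • σ)).trace).re}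

/-!
The Werner difference is diagonal in the pair `F`, `1 - F`:
`ω^q - γ ω^p = (A/d) F + (B/(d(d-1))) (1 - F)` with `A = 2(q - γp)/(d+1)` and `A + B = 1 - γ`.
For a PPT test `M` the objective is therefore `A x + B y` with `x = tr(MF)/d = tr(T_B(M) K)/d` and
`y = tr(M(1 - F))/(d(d-1))`, where `K = T_B(F)`. Both lie in `[0, 1]` because `0 ≤ K ≤ d` and
`0 ≤ 1 - F` with `tr(1 - F) = d(d-1)`, so `A + B ≤ 0` bounds the objective by `max 0 (max A B)`.
The three values are attained by `0`, by the test `(1 + F)/(d+1)` (for which `x = 1`, `y = 0`), and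
by its complement `(d - F)/(d+1)` (for which `x = 0`, `y = 1`).
-/

lemma mul_add_mul_le_max {A B x y : ℝ} (hAB : A + B ≤ 0) (hx : x ∈ Set.Icc (0 : ℝ) 1)
    (hy : y ∈ Set.Icc (0 : ℝ) 1) : A * x + B * y ≤ max 0 (max A B) := by
  obtain ⟨hx0, hx1⟩ := hx
  obtain ⟨hy0, hy1⟩ := hy
  rcases le_total A 0 with hA | hA <;> rcases le_total B 0 with hB | hB <;>
    nlinarith [le_max_left 0 (max A B), le_max_right 0 (max A B), le_max_left A B,
      le_max_right A B]

namespace Matrix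

variable {n 𝕜 : Type*} [Fintype n] [DecidableEq n] [RCLike 𝕜]

open scoped MatrixOrder in
lemma PosSemidef.trace_mul_nonneg {A B : Matrix n n 𝕜} (hA : A.PosSemidef) (hB : B.PosSemidef) :
    0 ≤ (A * B).trace := by
  obtain ⟨C, rfl⟩ := CStarAlgebra.nonneg_iff_eq_star_mul_self.mp hB.nonneg
  rw [← Matrix.mul_assoc, Matrix.trace_mul_cycle]
  exact (hA.mul_mul_conjTranspose_same C).trace_nonneg

lemma PosSemidef.trace_mul_le_trace {A B : Matrix n n 𝕜} (hA : (1 - A).PosSemidef)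
    (hB : B.PosSemidef) : (A * B).trace ≤ B.trace := by
  simpa [Matrix.sub_mul, sub_nonneg] using hA.trace_mul_nonneg hB

lemma IsHermitian.posSemidef_of_mul_self_eq_smul {P : Matrix n n 𝕜} (hP : P.IsHermitian)
    {c : ℝ} (hc : 0 < c) (hPP : P * P = (c : 𝕜) • P) : P.PosSemidef := by
  have hc' : (c : 𝕜) ≠ 0 := RCLike.ofReal_ne_zero.mpr hc.ne'
  have h := posSemidef_self_mul_conjTranspose ((c : 𝕜)⁻¹ • P)
  rw [conjTranspose_smul, hP.eq, smul_mul_smul_comm, hPP, smul_smul, star_inv₀,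
    RCLike.star_def, RCLike.conj_ofReal, mul_assoc, inv_mul_cancel₀ hc', mul_one] at h
  simpa [smul_smul, hc'] using h.smul ((RCLike.ofReal_nonneg (K := 𝕜)).mpr hc.le)

lemma IsHermitian.posSemidef_smul_one_sub_of_mul_self_eq_smul {P : Matrix n n 𝕜}
    (hP : P.IsHermitian) {c : ℝ} (hc : 0 < c) (hPP : P * P = (c : 𝕜) • P) :
    ((c : 𝕜) • 1 - P).PosSemidef := by
  refine IsHermitian.posSemidef_of_mul_self_eq_smul ?_ hc ?_
  · exact (isHermitian_one.smul (by simp [IsSelfAdjoint, RCLike.conj_ofReal])).sub hP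
  · rw [sub_mul, mul_sub, mul_sub, hPP]
    simp only [Matrix.smul_mul, Matrix.mul_smul, Matrix.one_mul, Matrix.mul_one, smul_smul]
    module

lemma PosSemidef.re_trace_mul_mem_Icc {A B : Matrix n n ℂ} (hA : A.PosSemidef)
    (hA' : (1 - A).PosSemidef) (hB : B.PosSemidef) : (A * B).trace.re ∈ Set.Icc 0 B.trace.re :=
  ⟨(Complex.le_def.mp (hA.trace_mul_nonneg hB)).1,
    (Complex.le_def.mp (hA'.trace_mul_le_trace hB)).1⟩

end Matrix

variable {d : ℕ}

/-- `K = T_B(F) = Σ_{i,j} |ii⟩⟨jj|`, which is `d` times the maximally entangled projector. -/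
def maxEnt (d : ℕ) : BMat d :=
  fun p q => if p.1 = p.2 ∧ q.1 = q.2 then 1 else 0

lemma swapOp_mul_swapOp : swapOp d * swapOp d = 1 := by
  ext ⟨a, b⟩ ⟨c, e⟩
  simp [mul_apply, swapOp, Fintype.sum_prod_type, one_apply, Prod.ext_iff, ite_and]

lemma maxEnt_mul_maxEnt : maxEnt d * maxEnt d = (d : ℂ) • maxEnt d := by
  ext ⟨a, b⟩ ⟨c, e⟩
  by_cases h₁ : a = b <;> by_cases h₂ : c = e <;>
    simp [mul_apply, maxEnt, Fintype.sum_prod_type, h₁, h₂]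

lemma isHermitian_swapOp : (swapOp d).IsHermitian := by
  ext ⟨a, b⟩ ⟨c, e⟩
  simp only [conjTranspose_apply, swapOp]
  split_ifs <;> simp_all

lemma isHermitian_maxEnt : (maxEnt d).IsHermitian := by
  ext ⟨a, b⟩ ⟨c, e⟩
  simp only [conjTranspose_apply, maxEnt]
  split_ifs <;> simp_all

lemma trace_swapOp : (swapOp d).trace = d := by
  simp only [trace, diag, swapOp, Fintype.sum_prod_type]
  simp [eq_comm]

lemma trace_maxEnt : (maxEnt d).trace = d := by
  simp only [trace, diag, maxEnt, Fintype.sum_prod_type, and_self]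
  simp

lemma trace_one_sub_swapOp : (1 - swapOp d).trace = d * (d - 1) := by
  rw [trace_sub, trace_one, trace_swapOp, Fintype.card_prod, Fintype.card_fin]
  push_cast
  ring

@[simp] lemma ptB_add (M N : BMat d) : ptB (M + N) = ptB M + ptB N := rfl

@[simp] lemma ptB_sub (M N : BMat d) : ptB (M - N) = ptB M - ptB N := rfl

@[simp] lemma ptB_smul (c : ℂ) (M : BMat d) : ptB (c • M) = c • ptB M := rfl

@[simp] lemma ptB_one : ptB (1 : BMat d) = 1 := by
  ext ⟨a, b⟩ ⟨c, e⟩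
  by_cases h₁ : a = c <;> by_cases h₂ : b = e <;> simp [ptB, one_apply, h₁, h₂, eq_comm]

@[simp] lemma ptB_swapOp : ptB (swapOp d) = maxEnt d := by
  ext ⟨a, b⟩ ⟨c, e⟩
  simp [ptB, swapOp, maxEnt, eq_comm]

lemma trace_ptB_mul_ptB (M N : BMat d) : (ptB M * ptB N).trace = (M * N).trace := by
  simp only [trace, diag, mul_apply, ptB, Fintype.sum_prod_type]
  refine Finset.sum_congr rfl fun a _ => ?_
  rw [Finset.sum_comm]
  conv_rhs => rw [Finset.sum_comm]
  exact Finset.sum_congr rfl fun x _ => Finset.sum_comm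

lemma one_add_swapOp_mul_self :
    (1 + swapOp d) * (1 + swapOp d) = ((2 : ℝ) : ℂ) • (1 + swapOp d) := by
  simp only [add_mul, mul_add, swapOp_mul_swapOp, Matrix.one_mul, Matrix.mul_one]
  push_cast
  module

lemma posSemidef_one_add_swapOp : (1 + swapOp d).PosSemidef :=
  (isHermitian_one.add isHermitian_swapOp).posSemidef_of_mul_self_eq_smul two_pos
    one_add_swapOp_mul_self

lemma posSemidef_one_sub_swapOp : (1 - swapOp d).PosSemidef := by
  have h := IsHermitian.posSemidef_smul_one_sub_of_mul_self_eq_smul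
    (isHermitian_one.add isHermitian_swapOp) two_pos (one_add_swapOp_mul_self (d := d))
  have e : ((2 : ℝ) : ℂ) • (1 : BMat d) - (1 + swapOp d) = 1 - swapOp d := by
    push_cast
    module
  exact e ▸ h

lemma posSemidef_smul_one_sub_swapOp (hd : 0 < d) : ((d : ℂ) • 1 - swapOp d).PosSemidef := by
  have h : (d : ℂ) • 1 - swapOp d = ((d - 1 : ℝ) : ℂ) • 1 + (1 - swapOp d) := by
    push_cast
    module
  have hd' : (0 : ℂ) ≤ ((d - 1 : ℝ) : ℂ) :=
    Complex.zero_le_real.mpr (sub_nonneg.mpr (Nat.one_le_cast.mpr hd))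
  rw [h]
  exact (PosSemidef.one.smul hd').add posSemidef_one_sub_swapOp

lemma posSemidef_maxEnt (hd : 0 < d) : (maxEnt d).PosSemidef :=
  isHermitian_maxEnt.posSemidef_of_mul_self_eq_smul (Nat.cast_pos.mpr hd) maxEnt_mul_maxEnt

lemma posSemidef_smul_one_sub_maxEnt (hd : 0 < d) : ((d : ℂ) • 1 - maxEnt d).PosSemidef :=
  isHermitian_maxEnt.posSemidef_smul_one_sub_of_mul_self_eq_smul (Nat.cast_pos.mpr hd)
    maxEnt_mul_maxEnt

def IsPPTTest (M : BMat d) : Prop :=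
  M.PosSemidef ∧ (1 - M).PosSemidef ∧ (ptB M).PosSemidef ∧ (1 - ptB M).PosSemidef

lemma EgPPT_eq_of_exists_of_forall_le {γ v : ℝ} {ρ σ : BMat d}
    (hv : ∃ M, IsPPTTest M ∧ (M * (ρ - (γ : ℂ) • σ)).trace.re = v)
    (hle : ∀ M, IsPPTTest M → (M * (ρ - (γ : ℂ) • σ)).trace.re ≤ v) :
    EgPPT γ ρ σ = v := by
  refine IsGreatest.csSup_eq ⟨?_, ?_⟩
  · obtain ⟨M, ⟨h₁, h₂, h₃, h₄⟩, rfl⟩ := hv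
    exact ⟨M, h₁, h₂, h₃, h₄, rfl⟩
  · rintro x ⟨M, h₁, h₂, h₃, h₄, rfl⟩
    exact hle M ⟨h₁, h₂, h₃, h₄⟩

lemma IsPPTTest.one_sub {M : BMat d} (h : IsPPTTest M) : IsPPTTest (1 - M) := by
  obtain ⟨h₁, h₂, h₃, h₄⟩ := h
  exact ⟨h₂, by simpa using h₁, by simpa using h₄, by simpa using h₃⟩

lemma isPPTTest_zero : IsPPTTest (0 : BMat d) := by
  have h : IsPPTTest (1 : BMat d) :=
    ⟨.one, by simpa using .zero, by simpa using .one, by simpa using .zero⟩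
  simpa using h.one_sub

lemma IsPPTTest.re_trace_mul_swapOp_div_mem {M : BMat d} (hd : 0 < d) (h : IsPPTTest M) :
    (M * swapOp d).trace.re / d ∈ Set.Icc (0 : ℝ) 1 := by
  have hK := PosSemidef.re_trace_mul_mem_Icc h.2.2.1 h.2.2.2 (posSemidef_maxEnt hd)
  rw [trace_maxEnt, ← ptB_swapOp, trace_ptB_mul_ptB, Complex.natCast_re] at hK
  exact ⟨div_nonneg hK.1 d.cast_nonneg, div_le_one_of_le₀ hK.2 d.cast_nonneg⟩

lemma IsPPTTest.re_trace_mul_one_sub_swapOp_div_mem {M : BMat d} (h : IsPPTTest M) :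
    (M * (1 - swapOp d)).trace.re / (d * (d - 1)) ∈ Set.Icc (0 : ℝ) 1 := by
  have hK := PosSemidef.re_trace_mul_mem_Icc h.1 h.2.1 (posSemidef_one_sub_swapOp (d := d))
  have hdd : (0 : ℝ) ≤ d * (d - 1) := by
    rcases Nat.eq_zero_or_pos d with rfl | hd
    · simp
    · exact mul_nonneg d.cast_nonneg (sub_nonneg.mpr (Nat.one_le_cast.mpr hd))
  rw [trace_one_sub_swapOp] at hK
  simp only [Complex.mul_re, Complex.natCast_re, Complex.natCast_im, Complex.sub_re,
    Complex.sub_im, Complex.one_re, Complex.one_im, zero_mul, sub_zero] at hK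
  exact ⟨div_nonneg hK.1 hdd, div_le_one_of_le₀ hK.2 hdd⟩

def symTest (d : ℕ) : BMat d := ((d : ℂ) + 1)⁻¹ • (1 + swapOp d)

lemma one_sub_inv_smul_one_add (X : BMat d) :
    1 - ((d : ℂ) + 1)⁻¹ • (1 + X) = ((d : ℂ) + 1)⁻¹ • ((d : ℂ) • 1 - X) := by
  have hd : (d : ℂ) + 1 ≠ 0 := by positivity
  rw [eq_inv_smul_iff₀ hd, smul_sub, smul_inv_smul₀ hd]
  module

lemma isPPTTest_symTest (hd : 0 < d) : IsPPTTest (symTest d) := by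
  have hc : (0 : ℂ) ≤ ((d : ℂ) + 1)⁻¹ := by positivity
  refine ⟨posSemidef_one_add_swapOp.smul hc, ?_, ?_, ?_⟩
  · rw [symTest, one_sub_inv_smul_one_add]
    exact (posSemidef_smul_one_sub_swapOp hd).smul hc
  · rw [symTest, ptB_smul, ptB_add, ptB_one, ptB_swapOp]
    exact (PosSemidef.one.add (posSemidef_maxEnt hd)).smul hc
  · rw [symTest, ptB_smul, ptB_add, ptB_one, ptB_swapOp, one_sub_inv_smul_one_add]
    exact (posSemidef_smul_one_sub_maxEnt hd).smul hc

lemma trace_symTest_mul_swapOp : (symTest d * swapOp d).trace = d := by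
  have hd : (d : ℂ) + 1 ≠ 0 := by positivity
  simp only [symTest, smul_mul, add_mul, Matrix.one_mul, swapOp_mul_swapOp, trace_smul,
    trace_add, trace_swapOp, trace_one, Fintype.card_prod, Fintype.card_fin, smul_eq_mul]
  push_cast
  field_simp
  ring

lemma trace_symTest_mul_one_sub_swapOp : (symTest d * (1 - swapOp d)).trace = 0 := by
  have h : (1 + swapOp d) * (1 - swapOp d) = 0 := by
    simp only [add_mul, mul_sub, Matrix.one_mul, Matrix.mul_one, swapOp_mul_swapOp]
    abel
  rw [symTest, smul_mul, h, smul_zero, trace_zero]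

lemma werner_sub_smul_werner (hd : 2 ≤ d) (p q γ : ℝ) :
    werner d q - (γ : ℂ) • werner d p =
      ((2 * (q - γ * p) / (d + 1) / d : ℝ) : ℂ) • swapOp d +
        (((1 - γ - 2 * (q - γ * p) / (d + 1)) / (d * (d - 1)) : ℝ) : ℂ) •
          (1 - swapOp d) := by
  have hd0 : (d : ℂ) ≠ 0 := by exact_mod_cast (by omega : d ≠ 0)
  have hd1 : (d : ℂ) + 1 ≠ 0 := by positivity
  have hd2 : (d : ℂ) - 1 ≠ 0 := by
    rw [sub_ne_zero]
    exact_mod_cast (by omega : d ≠ 1)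
  simp only [werner, wΘ, wΘperp, smul_add, smul_sub, smul_smul]
  push_cast
  match_scalars <;> field_simp <;> ring

lemma re_trace_mul_werner_sub (hd : 2 ≤ d) (p q γ : ℝ) (M : BMat d) :
    (M * (werner d q - (γ : ℂ) • werner d p)).trace.re =
      2 * (q - γ * p) / (d + 1) * ((M * swapOp d).trace.re / d) +
        (1 - γ - 2 * (q - γ * p) / (d + 1)) *
          ((M * (1 - swapOp d)).trace.re / (d * (d - 1))) := by
  rw [werner_sub_smul_werner hd, Matrix.mul_add, Matrix.mul_smul, Matrix.mul_smul, trace_add,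
    trace_smul, trace_smul, smul_eq_mul, smul_eq_mul, Complex.add_re, Complex.re_ofReal_mul,
    Complex.re_ofReal_mul]
  ring

lemma re_trace_symTest_mul_werner_sub (hd : 2 ≤ d) (p q γ : ℝ) :
    (symTest d * (werner d q - (γ : ℂ) • werner d p)).trace.re =
      2 * (q - γ * p) / (d + 1) := by
  have hd0 : (d : ℝ) ≠ 0 := by positivity
  rw [re_trace_mul_werner_sub hd, trace_symTest_mul_swapOp, trace_symTest_mul_one_sub_swapOp]
  simp [hd0]

lemma re_trace_one_sub_symTest_mul_werner_sub (hd : 2 ≤ d) (p q γ : ℝ) :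
    ((1 - symTest d) * (werner d q - (γ : ℂ) • werner d p)).trace.re =
      1 - γ - 2 * (q - γ * p) / (d + 1) := by
  have hdd : (d : ℝ) * (d - 1) ≠ 0 := by
    have : (2 : ℝ) ≤ d := by exact_mod_cast hd
    nlinarith
  rw [re_trace_mul_werner_sub hd]
  simp only [sub_mul _ _ (swapOp d), sub_mul _ _ (1 - swapOp d), Matrix.one_mul, trace_sub,
    trace_symTest_mul_swapOp, trace_symTest_mul_one_sub_swapOp, trace_swapOp, trace_one]
  simp [← mul_sub_one, hdd]

theorem stmt_9_general (d : ℕ) (hd : 2 ≤ d) (p q : ℝ)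
    (γ : ℝ) (hγ : 1 ≤ γ) :
    EgPPT γ (werner d q) (werner d p) =
      max 0 (max (2 * (q - γ * p) / (d + 1)) (1 - γ - 2 * (q - γ * p) / (d + 1))) := by
  have hd0 : 0 < d := by omega
  have hA := re_trace_symTest_mul_werner_sub hd p q γ
  have hB := re_trace_one_sub_symTest_mul_werner_sub hd p q γ
  set A := 2 * (q - γ * p) / (d + 1)
  refine EgPPT_eq_of_exists_of_forall_le ?_ fun M hM => ?_
  · rcases max_choice 0 (max A (1 - γ - A)) with h | h <;> rw [h]
    · exact ⟨0, isPPTTest_zero, by simp⟩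
    rcases max_choice A (1 - γ - A) with h | h <;> rw [h]
    · exact ⟨symTest d, isPPTTest_symTest hd0, hA⟩
    · exact ⟨1 - symTest d, (isPPTTest_symTest hd0).one_sub, hB⟩
  · rw [re_trace_mul_werner_sub hd]
    exact mul_add_mul_le_max (by linarith) (hM.re_trace_mul_swapOp_div_mem hd0)
      hM.re_trace_mul_one_sub_swapOp_div_mem

/-- PPT-measured hockey-stick divergence for Werner states. -/
theorem stmt_9 (d : ℕ) (hd : 2 ≤ d) (p q : ℝ)
    (hp : p ∈ Set.Icc (0 : ℝ) 1) (hq : q ∈ Set.Icc (0 : ℝ) 1)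
    (γ : ℝ) (hγ : 1 ≤ γ) :
    EgPPT γ (werner d q) (werner d p) =
      max 0 (max (2 * (q - γ * p) / (d + 1)) (1 - γ - 2 * (q - γ * p) / (d + 1))) :=
  stmt_9_general d hd p q γ hγ
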